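/- arXiv:1402.1135 — 4 statements merged into one kernel-verified Lean document; each statement's English description precedes it below -/
import Mathlib

section
/- Let T ∈ M_{m,n}(ℤ) and v ∈ ℤ^n. The group homomorphism from T^{-1}(ℤ^m)/ℤ^n to ℝ/ℤ given by ξ ↦ ⟨ξ, v⟩ + ℤ is identically zero if and only if v ∈ T^*(ℤ^m), i.e. v lies in the image of ℤ^m under the transpose of T. -/
/-!
If `v ∉ Tᵀ ℤ^m`, then since `ℚ/ℤ` is an injective cogenerator there is a character of
`ℤ^n / Tᵀ ℤ^m` that does not vanish at `v`. As `ℤ^n` is free, this character lifts to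
`x ↦ ⟨q, x⟩` for some `q ∈ ℚ^n`; vanishing on the rows of `T` means `T q ∈ ℤ^m`, while
`⟨q, v⟩ ∉ ℤ`. Conversely `⟨ξ, Tᵀ w⟩ = ⟨T ξ, w⟩`.
-/

open Matrix

theorem AddMonoidHom.exists_apply_eq_sum_zsmul_of_surjective {n A B : Type*} [Fintype n]
    [AddCommGroup A] [AddCommGroup B] {π : A →+ B} (hπ : Function.Surjective π)
    (f : (n → ℤ) →+ B) :
    ∃ q : n → A, ∀ x, f x = π (∑ i, x i • q i) := by
  classical
  choose q hq using fun i => hπ (f (Pi.single i 1))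
  refine ⟨q, fun x => ?_⟩
  have hsingle (i : n) : (Pi.single i (x i) : n → ℤ) = x i • Pi.single i 1 := by
    rw [← Pi.single_smul', smul_eq_mul, mul_one]
  conv_lhs => rw [← Finset.univ_sum_single x]
  simp only [map_sum, hsingle, map_zsmul, hq]

theorem AddCircle.coe_eq_zero_iff_exists_int {R : Type*} [Ring R] {x : R} :
    (x : AddCircle (1 : R)) = 0 ↔ ∃ k : ℤ, x = k := by
  simp only [AddCircle.coe_eq_zero_iff, zsmul_one]
  exact exists_congr fun _ => eq_comm

theorem AddSubgroup.exists_le_ker_apply_ne_zero_of_notMem {A : Type*} [AddCommGroup A]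
    {L : AddSubgroup A} {v : A} (hv : v ∉ L) :
    ∃ f : A →+ AddCircle (1 : ℚ), L ≤ f.ker ∧ f v ≠ 0 := by
  obtain ⟨c, hc⟩ := CharacterModule.exists_character_apply_ne_zero_of_ne_zero
    (a := (v : A ⧸ L)) (by rwa [ne_eq, QuotientAddGroup.eq_zero_iff])
  refine ⟨c.comp (QuotientAddGroup.mk' L), fun x hx => ?_, hc⟩
  change c (x : A ⧸ L) = 0
  rw [(QuotientAddGroup.eq_zero_iff x).2 hx, map_zero]

namespace Matrix

variable {m n : Type*} [Fintype n]

theorem dotProduct_intCast_transpose_mulVec [Fintype m] {R : Type*} [CommRing R]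
    (T : Matrix m n ℤ) (ξ : n → R) (w : m → ℤ) :
    ξ ⬝ᵥ (Int.cast ∘ (Tᵀ *ᵥ w)) = (T.map Int.cast *ᵥ ξ) ⬝ᵥ (Int.cast ∘ w) := by
  have hcast : Int.cast ∘ (Tᵀ *ᵥ w) = (T.map (Int.cast : ℤ → R))ᵀ *ᵥ (Int.cast ∘ w) :=
    funext fun i => (Int.castRingHom R).map_mulVec Tᵀ w i
  rw [hcast, dotProduct_mulVec, vecMul_transpose]

theorem intCast_map_mulVec_ratCast {K : Type*} [DivisionRing K] [CharZero K]
    (T : Matrix m n ℤ) (q : n → ℚ) :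
    T.map (Int.cast : ℤ → K) *ᵥ (Rat.cast ∘ q) = Rat.cast ∘ (T.map Int.cast *ᵥ q) := by
  ext j
  simp [mulVec, dotProduct]

theorem exists_rat_not_int_of_forall_transpose_mulVec_ne [Fintype m] (T : Matrix m n ℤ)
    {v : n → ℤ} (hv : ∀ w, Tᵀ *ᵥ w ≠ v) :
    ∃ q : n → ℚ, (∀ j, ∃ k : ℤ, (T.map Int.cast *ᵥ q) j = k) ∧
      ¬∃ k : ℤ, q ⬝ᵥ (Int.cast ∘ v) = k := by
  classical
  obtain ⟨f, hfL, hfv⟩ := AddSubgroup.exists_le_ker_apply_ne_zero_of_notMem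
    (L := (mulVecLin Tᵀ).range.toAddSubgroup) (v := v) fun ⟨w, hw⟩ => hv w hw
  obtain ⟨q, hq⟩ :=
    AddMonoidHom.exists_apply_eq_sum_zsmul_of_surjective (QuotientAddGroup.mk'_surjective _) f
  have hf (x : n → ℤ) : f x = ((q ⬝ᵥ (Int.cast ∘ x) : ℚ) : AddCircle (1 : ℚ)) := by
    simp [hq, dotProduct, zsmul_eq_mul, mul_comm]
  refine ⟨q, fun j => ?_, fun hqv => hfv ?_⟩
  · have hrow : f (Tᵀ *ᵥ Pi.single j 1) = 0 := hfL ⟨Pi.single j 1, rfl⟩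
    obtain ⟨k, hk⟩ := AddCircle.coe_eq_zero_iff_exists_int.1 (hf _ ▸ hrow)
    refine ⟨k, ?_⟩
    rw [← hk]
    simp [mulVec, dotProduct, mul_comm]
  · rw [hf, AddCircle.coe_eq_zero_iff_exists_int]
    exact hqv

end Matrix

/-- Let `T ∈ M_{m,n}(ℤ)` and `v ∈ ℤ^n`. The homomorphism `T^{-1}(ℤ^m)/ℤ^n → ℝ/ℤ`,
`ξ ↦ ⟨ξ, v⟩ + ℤ`, is identically zero (i.e. `⟨ξ, v⟩ ∈ ℤ` for every `ξ ∈ ℝ^n` with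
`Tξ ∈ ℤ^m`) if and only if `v ∈ Tᵀ(ℤ^m)`. -/
theorem pairing_vanishes_iff_mem_transpose_image {m n : ℕ}
    (T : Matrix (Fin m) (Fin n) ℤ) (v : Fin n → ℤ) :
    (∀ ξ : Fin n → ℝ, (∀ i, ∃ k : ℤ, (T.map ((↑) : ℤ → ℝ)).mulVec ξ i = (k : ℝ)) →
        ∃ k : ℤ, (∑ i, ξ i * (v i : ℝ)) = (k : ℝ)) ↔
      ∃ w : Fin m → ℤ, T.transpose.mulVec w = v := by
  constructor
  · intro h
    by_contra! hv
    obtain ⟨q, hTq, hqv⟩ := T.exists_rat_not_int_of_forall_transpose_mulVec_ne hv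
    obtain ⟨k, hk⟩ := h (Rat.cast ∘ q) fun j => by
      obtain ⟨k, hk⟩ := hTq j
      exact ⟨k, by rw [intCast_map_mulVec_ratCast, Function.comp_apply, hk, Rat.cast_intCast]⟩
    refine hqv ⟨k, ?_⟩
    simp only [dotProduct, Function.comp_apply] at hk ⊢
    exact_mod_cast hk
  · rintro ⟨w, rfl⟩ ξ hξ
    choose k hk using hξ
    refine ⟨k ⬝ᵥ w, ?_⟩
    calc ∑ i, ξ i * ((Tᵀ *ᵥ w) i : ℝ) = (T.map Int.cast *ᵥ ξ) ⬝ᵥ (Int.cast ∘ w) :=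
          dotProduct_intCast_transpose_mulVec T ξ w
      _ = ((k ⬝ᵥ w : ℤ) : ℝ) := by
          rw [funext hk]
          push_cast [dotProduct]
          rfl
end

section
/- For ε < 1/e, the maximum of φ(x) = −Σ_{j=1}^N x_j log x_j over the domain D = {x ∈ ℝ^N : x_j ≥ 0, Σ_j j·x_j ≤ ε} is at most max(ε·log 4 − ε·log ε, ε + ε·log 2). -/
/-- `log t ≤ t / e` for `t > 0`. -/
lemma log_le_div_e {t : ℝ} (ht : 0 < t) : Real.log t ≤ t / Real.exp 1 := by
  have he : (0:ℝ) < Real.exp 1 := Real.exp_pos 1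
  have h1 : 0 < t / Real.exp 1 := div_pos ht he
  have h2 := Real.log_le_sub_one_of_pos h1
  have h3 : Real.log (t / Real.exp 1) = Real.log t - 1 := by
    rw [Real.log_div (ne_of_gt ht) (ne_of_gt he), Real.log_exp]
  linarith [h2, h3.symm ▸ h2]

/-- key pointwise bound: `-x log x ≤ -x log q + q/e` for `x ≥ 0`, `q > 0`. -/
lemma neg_xlogx_le {x q : ℝ} (hx : 0 ≤ x) (hq : 0 < q) :
    -(x * Real.log x) ≤ -(x * Real.log q) + q / Real.exp 1 := by
  rcases eq_or_lt_of_le hx with h | h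
  · simp [← h]
    positivity
  · have hlog : Real.log q - Real.log x = Real.log (q / x) :=
      (Real.log_div (ne_of_gt hq) (ne_of_gt h)).symm
    have h1 : Real.log (q / x) ≤ (q / x) / Real.exp 1 := log_le_div_e (div_pos hq h)
    have h2 : x * Real.log (q / x) ≤ x * ((q / x) / Real.exp 1) :=
      mul_le_mul_of_nonneg_left h1 hx
    have h3 : x * ((q / x) / Real.exp 1) = q / Real.exp 1 := by
      field_simp
    nlinarith [h2, h3, hlog]

/-- For `0 < ε < 1/e`, the maximum of `φ(x) = −Σ_{j=1}^N x_j log x_j` over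
`D = {x : x_j ≥ 0, Σ_j j·x_j ≤ ε}` is at most
`max (ε log 4 − ε log ε) (ε + ε log 2)`, uniformly in `N`. -/
theorem entropy_maximization_bound (ε : ℝ) (hε : 0 < ε) (hεe : ε < 1 / Real.exp 1)
    (N : ℕ) (x : Fin N → ℝ) (hx : ∀ j, 0 ≤ x j)
    (hsum : (∑ j : Fin N, ((j : ℕ) + 1 : ℝ) * x j) ≤ ε) :
    (-∑ j : Fin N, x j * Real.log (x j)) ≤
      max (ε * Real.log 4 - ε * Real.log ε) (ε + ε * Real.log 2) := by
  have he : (0:ℝ) < Real.exp 1 := Real.exp_pos 1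
  set q : Fin N → ℝ := fun j => ε / 2 ^ ((j : ℕ) + 1) with hqdef
  have hqpos : ∀ j : Fin N, 0 < q j := fun j => by positivity
  -- pointwise bound summed
  have step1 : (-∑ j : Fin N, x j * Real.log (x j)) ≤
      (∑ j : Fin N, -(x j * Real.log (q j))) + ∑ j : Fin N, q j / Real.exp 1 := by
    rw [← Finset.sum_neg_distrib, ← Finset.sum_add_distrib]
    exact Finset.sum_le_sum fun j _ => neg_xlogx_le (hx j) (hqpos j)
  -- sum of q ≤ ε
  have hqsum : (∑ j : Fin N, q j) ≤ ε := by
    have : (∑ j : Fin N, q j) = ∑ j ∈ Finset.range N, ε * (1/2 : ℝ) ^ (j + 1) := by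
      rw [hqdef, Fin.sum_univ_eq_sum_range (fun j => ε / 2 ^ (j + 1))]
      refine Finset.sum_congr rfl fun j _ => ?_
      rw [one_div, inv_pow, ← div_eq_mul_inv]
    rw [this, ← Finset.mul_sum]
    have hg : (∑ j ∈ Finset.range N, (1/2 : ℝ) ^ (j + 1)) ≤ 1 := by
      have : (∑ j ∈ Finset.range N, (1/2 : ℝ) ^ (j + 1))
          = (1/2) * ∑ j ∈ Finset.range N, (1/2 : ℝ) ^ j := by
        rw [Finset.mul_sum]
        exact Finset.sum_congr rfl fun j _ => by ring
      rw [this]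
      have := sum_geometric_two_le N
      linarith
    nlinarith
  -- log q j = log ε - (j+1) log 2
  have hlogq : ∀ j : Fin N, Real.log (q j) = Real.log ε - ((j : ℕ) + 1 : ℝ) * Real.log 2 := by
    intro j
    rw [hqdef]
    simp only
    rw [Real.log_div (ne_of_gt hε) (by positivity), Real.log_pow]
    push_cast
    ring
  -- total sum x ≤ ε
  have hxsum : (∑ j : Fin N, x j) ≤ ε := by
    refine le_trans (Finset.sum_le_sum fun j _ => ?_) hsum
    nlinarith [hx j, (j : ℕ).cast_nonneg (α := ℝ)]
  -- ε < 1 so log ε < 0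
  have hε1 : ε < 1 := lt_of_lt_of_le hεe (by
    rw [div_le_one he]
    linarith [Real.exp_one_gt_d9])
  have hlogε : Real.log ε < 0 := Real.log_neg hε hε1
  have hlog2 : 0 < Real.log 2 := Real.log_pos (by norm_num)
  -- bound the main sum
  have step2 : (∑ j : Fin N, -(x j * Real.log (q j))) ≤
      ε * Real.log 2 - ε * Real.log ε := by
    have : (∑ j : Fin N, -(x j * Real.log (q j)))
        = Real.log 2 * (∑ j : Fin N, ((j : ℕ) + 1 : ℝ) * x j)
          - Real.log ε * (∑ j : Fin N, x j) := by
      rw [Finset.mul_sum, Finset.mul_sum, ← Finset.sum_sub_distrib]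
      refine Finset.sum_congr rfl fun j _ => ?_
      rw [hlogq j]; ring
    rw [this]
    have h1 : Real.log 2 * (∑ j : Fin N, ((j : ℕ) + 1 : ℝ) * x j) ≤ Real.log 2 * ε :=
      mul_le_mul_of_nonneg_left hsum (le_of_lt hlog2)
    have h2 : -Real.log ε * (∑ j : Fin N, x j) ≤ -Real.log ε * ε :=
      mul_le_mul_of_nonneg_left hxsum (by linarith)
    nlinarith
  have step3 : (∑ j : Fin N, q j / Real.exp 1) ≤ ε / Real.exp 1 := by
    rw [← Finset.sum_div]
    gcongr
  -- numeric: 1/e ≤ log 2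
  have hnum : ε / Real.exp 1 ≤ ε * Real.log 2 := by
    have h1 : (1:ℝ) / Real.exp 1 ≤ Real.log 2 := by
      have h0 : (1:ℝ) / Real.exp 1 < 0.37 := by
        rw [div_lt_iff₀ he]
        nlinarith [Real.exp_one_gt_d9]
      linarith [Real.log_two_gt_d9]
    calc ε / Real.exp 1 = ε * (1 / Real.exp 1) := by ring
      _ ≤ ε * Real.log 2 := mul_le_mul_of_nonneg_left h1 (le_of_lt hε)
  have hlog4 : Real.log 4 = 2 * Real.log 2 := by
    rw [show (4:ℝ) = 2 ^ 2 by norm_num, Real.log_pow]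
    push_cast; ring
  have h4 : ε * Real.log 4 = 2 * (ε * Real.log 2) := by rw [hlog4]; ring
  refine le_trans step1 (le_trans (by linarith) (le_max_left _ _))
end

section
/- Let n_k be a sequence of positive integers with n_k → ∞, and c_k a sequence of positive reals with c_k → 0. Then sup over ξ ∈ ℝ^{n_k} with ‖ξ‖ ≤ c_k/√(n_k) of the ratio vol(B \ (B + ξ))/vol(B) tends to 0 as k → ∞, where B is the closed unit Euclidean ball in ℝ^{n_k} and ‖·‖ is the Euclidean norm. -/
/-!
Slice `B \ (ξ + B)` by the lines parallel to `ξ`: such a line meets it only if it meets `B`,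
i.e. passes through the `(n - 1)`-dimensional unit ball orthogonal to `ξ`, and then in a
segment of length at most `‖ξ‖`. Hence `vol (B \ (ξ + B)) ≤ ‖ξ‖ vol B_{n-1}`, and the
log-convexity of `Γ` gives `vol B_{n-1} ≤ √n vol B_n`, so the ratio is at most `‖ξ‖ √n ≤ c_k`.
-/

open MeasureTheory Filter Real Metric

theorem Real.Gamma_add_half_le_sqrt_mul_Gamma {y : ℝ} (hy : 0 < y) :
    Gamma (y + 1 / 2) ≤ √y * Gamma y := by
  have hΓ := (Gamma_pos_of_pos hy).le
  calc Gamma (y + 1 / 2) = Gamma (1 / 2 * y + 1 / 2 * (y + 1)) := by ring_nf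
    _ ≤ Gamma y ^ (1 / 2 : ℝ) * Gamma (y + 1) ^ (1 / 2 : ℝ) :=
      Gamma_mul_add_mul_le_rpow_Gamma_mul_rpow_Gamma hy (by linarith) (by norm_num)
        (by norm_num) (by norm_num)
    _ = √(y * Gamma y ^ 2) := by
      rw [Gamma_add_one hy.ne', ← mul_rpow hΓ (by positivity), ← sqrt_eq_rpow]
      ring_nf
    _ = √y * Gamma y := by rw [sqrt_mul hy.le, sqrt_sq hΓ]

theorem EuclideanSpace.volume_closedBall_zero_one (n : ℕ) :
    volume (closedBall (0 : EuclideanSpace ℝ (Fin n)) 1) =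
      ENNReal.ofReal (√π ^ n / Gamma (n / 2 + 1)) := by
  cases n with
  | zero =>
    simp [volume_euclideanSpace_eq_dirac, Measure.dirac_apply' _ measurableSet_closedBall]
  | succ m => simp [EuclideanSpace.volume_closedBall]

theorem EuclideanSpace.volume_closedBall_le_sqrt_mul_volume_closedBall_succ (m : ℕ) :
    volume (closedBall (0 : EuclideanSpace ℝ (Fin m)) 1) ≤
      ENNReal.ofReal √(m + 1) * volume (closedBall (0 : EuclideanSpace ℝ (Fin (m + 1))) 1) := by
  rw [volume_closedBall_zero_one, volume_closedBall_zero_one, ← ENNReal.ofReal_mul (by positivity)]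
  refine ENNReal.ofReal_le_ofReal ?_
  set y : ℝ := m / 2 + 1
  have hy : 0 < y := by positivity
  have hsucc : ((m + 1 : ℕ) : ℝ) / 2 + 1 = y + 1 / 2 := by push_cast; ring
  have hy_le : √y ≤ √(m + 1) * √π := by
    rw [← sqrt_mul (by positivity)]
    exact sqrt_le_sqrt (show (m : ℝ) / 2 + 1 ≤ (m + 1) * π by nlinarith [pi_gt_three])
  have hΓ_le : Gamma (y + 1 / 2) ≤ √(m + 1) * √π * Gamma y :=
    (Gamma_add_half_le_sqrt_mul_Gamma hy).trans (by gcongr)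
  rw [hsucc, mul_div_assoc', le_div_iff₀ (Gamma_pos_of_pos (by positivity)), pow_succ]
  calc √π ^ m / Gamma y * Gamma (y + 1 / 2) ≤ √π ^ m / Gamma y * (√(m + 1) * √π * Gamma y) := by
        gcongr
    _ = √(m + 1) * (√π ^ m * √π) := by field_simp

theorem Real.volume_setOf_sq_le_and_lt_sub_sq_le {d : ℝ} (hd : 0 ≤ d) (a : ℝ) :
    volume {t : ℝ | t ^ 2 ≤ a ∧ a < (t - d) ^ 2} ≤ ENNReal.ofReal d := by
  have hsub : {t : ℝ | t ^ 2 ≤ a ∧ a < (t - d) ^ 2} ⊆ Set.Ico (-√a) (d - √a) := by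
    rintro t ⟨hta, hdt⟩
    have ha : √a ^ 2 = a := sq_sqrt ((sq_nonneg t).trans hta)
    have ht := abs_le.mp (abs_le_sqrt hta)
    refine ⟨ht.1, lt_of_not_ge fun h => hdt.not_ge ?_⟩
    nlinarith
  calc volume _ ≤ volume (Set.Ico (-√a) (d - √a)) := measure_mono hsub
    _ = ENNReal.ofReal d := by rw [Real.volume_Ico]; ring_nf

theorem measure_prod_setOf_sq_add_le_and_lt_sub_sq_add_le {F : Type*} [MeasurableSpace F]
    (μ : Measure F) [SFinite μ] {q : F → ℝ} (hq : Measurable q) {d : ℝ} (hd : 0 ≤ d) (r : ℝ) :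
    (volume.prod μ) {p : ℝ × F | p.1 ^ 2 + q p.2 ≤ r ∧ r < (p.1 - d) ^ 2 + q p.2} ≤
      ENNReal.ofReal d * μ {y | q y ≤ r} := by
  have hmeas : MeasurableSet {p : ℝ × F | p.1 ^ 2 + q p.2 ≤ r ∧ r < (p.1 - d) ^ 2 + q p.2} := by
    apply MeasurableSet.inter
    · exact measurableSet_le (by fun_prop : Measurable fun p : ℝ × F => p.1 ^ 2 + q p.2)
        measurable_const
    · exact measurableSet_lt measurable_const
        (by fun_prop : Measurable fun p : ℝ × F => (p.1 - d) ^ 2 + q p.2)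
  have hslice (y : F) :
      volume ((fun t => (t, y)) ⁻¹' {p : ℝ × F | p.1 ^ 2 + q p.2 ≤ r ∧ r < (p.1 - d) ^ 2 + q p.2})
        ≤ {y | q y ≤ r}.indicator (fun _ => ENNReal.ofReal d) y := by
    by_cases hy : q y ≤ r
    · rw [Set.indicator_of_mem (show y ∈ {y | q y ≤ r} from hy)]
      refine le_of_eq_of_le ?_ (Real.volume_setOf_sq_le_and_lt_sub_sq_le hd (r - q y))
      congr 1
      ext t
      simp only [Set.mem_preimage, Set.mem_ofPred_eq]
      constructor <;> rintro ⟨h₁, h₂⟩ <;> constructor <;> linarith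
    · rw [Set.indicator_of_notMem (show y ∉ {y | q y ≤ r} from hy)]
      refine le_of_eq (measure_eq_zero_iff_ae_notMem.mpr (ae_of_all _ ?_))
      rintro t ⟨ht, -⟩
      nlinarith [sq_nonneg t]
  rw [Measure.prod_apply_symm hmeas]
  calc ∫⁻ y, volume _ ∂μ ≤ ∫⁻ y, {y | q y ≤ r}.indicator (fun _ => ENNReal.ofReal d) y ∂μ :=
        lintegral_mono hslice
    _ = ENNReal.ofReal d * μ {y | q y ≤ r} :=
        lintegral_indicator_const (measurableSet_le hq measurable_const) _

theorem EuclideanSpace.mem_closedBall_zero_one_iff {ι : Type*} [Fintype ι]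
    (x : EuclideanSpace ℝ ι) : x ∈ closedBall 0 1 ↔ ∑ i, x i ^ 2 ≤ 1 := by
  rw [mem_closedBall_zero_iff, ← sq_le_one_iff₀ (norm_nonneg x), EuclideanSpace.norm_sq_eq]
  simp only [Real.norm_eq_abs, sq_abs]

theorem EuclideanSpace.volume_closedBall_diff_closedBall_single_le (m : ℕ) {d : ℝ} (hd : 0 ≤ d) :
    volume (closedBall (0 : EuclideanSpace ℝ (Fin (m + 1))) 1 \
        closedBall (EuclideanSpace.single 0 d) 1) ≤
      ENNReal.ofReal d * volume (closedBall (0 : EuclideanSpace ℝ (Fin m)) 1) := by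
  let coord := (MeasurableEquiv.toLp 2 (Fin (m + 1) → ℝ)).symm.trans
    (MeasurableEquiv.piFinSuccAbove (fun _ : Fin (m + 1) => ℝ) 0)
  have hcoord : MeasurePreserving coord :=
    (volume_preserving_symm_measurableEquiv_toLp (Fin (m + 1))).trans
      (volume_preserving_piFinSuccAbove (fun _ : Fin (m + 1) => ℝ) 0)
  have hset : closedBall (0 : EuclideanSpace ℝ (Fin (m + 1))) 1 \
      closedBall (EuclideanSpace.single 0 d) 1 =
      coord ⁻¹' {p : ℝ × (Fin m → ℝ) | p.1 ^ 2 + ∑ i, p.2 i ^ 2 ≤ 1 ∧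
          1 < (p.1 - d) ^ 2 + ∑ i, p.2 i ^ 2} := by
    ext x
    rw [Set.mem_sdiff, mem_closedBall_zero_one_iff, mem_closedBall_iff_norm, ← dist_zero_right,
      ← mem_closedBall, mem_closedBall_zero_one_iff]
    simp [coord, Fin.sum_univ_succ, Fin.tail]
  have hball : closedBall (0 : EuclideanSpace ℝ (Fin m)) 1 =
      (MeasurableEquiv.toLp 2 (Fin m → ℝ)).symm ⁻¹' {y : Fin m → ℝ | ∑ i, y i ^ 2 ≤ 1} := by
    ext x
    exact mem_closedBall_zero_one_iff x
  rw [hset, hcoord.measure_preimage_equiv, hball,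
    (volume_preserving_symm_measurableEquiv_toLp (Fin m)).measure_preimage_equiv,
    Measure.volume_eq_prod]
  exact measure_prod_setOf_sq_add_le_and_lt_sub_sq_add_le volume
    (Finset.measurable_sum _ fun i _ => (measurable_pi_apply i).pow_const 2) hd 1

theorem volume_closedBall_diff_closedBall_eq_of_norm_eq {E : Type*} [NormedAddCommGroup E]
    [InnerProductSpace ℝ E] [FiniteDimensional ℝ E] [MeasurableSpace E] [BorelSpace E]
    {ξ η : E} (h : ‖ξ‖ = ‖η‖) (r : ℝ) :
    volume (closedBall 0 r \ closedBall ξ r) = volume (closedBall 0 r \ closedBall η r) := by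
  set R := Submodule.reflection (ℝ ∙ (ξ - η))ᗮ
  have hR : R.symm η = ξ := R.symm_apply_eq.mpr (Submodule.reflection_sub h).symm
  rw [← R.measurePreserving.measure_preimage (s := closedBall 0 r \ closedBall η r)
    (measurableSet_closedBall.diff measurableSet_closedBall).nullMeasurableSet,
    Set.preimage_sdiff, R.preimage_closedBall, R.preimage_closedBall, map_zero, hR]

theorem EuclideanSpace.volume_closedBall_diff_closedBall_le (n : ℕ)
    (ξ : EuclideanSpace ℝ (Fin n)) :
    volume (closedBall 0 1 \ closedBall ξ 1) ≤
      ENNReal.ofReal (‖ξ‖ * √n) * volume (closedBall (0 : EuclideanSpace ℝ (Fin n)) 1) := by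
  cases n with
  | zero => simp [Subsingleton.elim ξ 0]
  | succ m =>
    rw [volume_closedBall_diff_closedBall_eq_of_norm_eq (η := single 0 ‖ξ‖) (by simp) 1]
    calc _ ≤ ENNReal.ofReal ‖ξ‖ * volume (closedBall (0 : EuclideanSpace ℝ (Fin m)) 1) :=
          volume_closedBall_diff_closedBall_single_le m (norm_nonneg ξ)
      _ ≤ ENNReal.ofReal ‖ξ‖ * (ENNReal.ofReal √(m + 1) *
            volume (closedBall (0 : EuclideanSpace ℝ (Fin (m + 1))) 1)) := by
          gcongr
          exact volume_closedBall_le_sqrt_mul_volume_closedBall_succ m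
      _ = _ := by rw [← mul_assoc, ← ENNReal.ofReal_mul (norm_nonneg ξ)]; push_cast; rfl

theorem EuclideanSpace.toReal_volume_closedBall_diff_translate_div_le (n : ℕ)
    (ξ : EuclideanSpace ℝ (Fin n)) :
    (volume (closedBall 0 1 \ ((fun y => ξ + y) '' closedBall 0 1))).toReal /
        (volume (closedBall (0 : EuclideanSpace ℝ (Fin n)) 1)).toReal ≤ ‖ξ‖ * √n := by
  have htranslate : (fun y => ξ + y) '' closedBall 0 1 = closedBall ξ 1 := by simp
  have hball_pos : 0 < (volume (closedBall (0 : EuclideanSpace ℝ (Fin n)) 1)).toReal :=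
    ENNReal.toReal_pos (measure_closedBall_pos _ _ one_pos).ne' measure_closedBall_lt_top.ne
  rw [htranslate, div_le_iff₀ hball_pos, ← ENNReal.toReal_ofReal (by positivity : 0 ≤ ‖ξ‖ * √n),
    ← ENNReal.toReal_mul]
  exact ENNReal.toReal_mono (ENNReal.mul_ne_top ENNReal.ofReal_ne_top measure_closedBall_lt_top.ne)
    (volume_closedBall_diff_closedBall_le n ξ)

lemma mul_le_abs_of_le_div {a b s : ℝ} (hs : 0 ≤ s) (h : a ≤ b / s) : a * s ≤ |b| := by
  rcases hs.eq_or_lt with rfl | hs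
  · simp
  · exact ((le_div_iff₀ hs).mp h).trans (le_abs_self b)

theorem ball_translation_volume_ratio_tendsto_zero_general
    (n : ℕ → ℕ) (c : ℕ → ℝ) (hc0 : Tendsto c atTop (nhds 0)) :
    Tendsto (fun k =>
      ⨆ ξ : {ξ : EuclideanSpace ℝ (Fin (n k)) // ‖ξ‖ ≤ c k / Real.sqrt (n k)},
        (volume ((Metric.closedBall (0 : EuclideanSpace ℝ (Fin (n k))) 1) \
            ((fun y => ξ.1 + y) '' (Metric.closedBall 0 1)))).toReal /
          (volume (Metric.closedBall (0 : EuclideanSpace ℝ (Fin (n k))) 1)).toReal)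
      atTop (nhds 0) := by
  refine squeeze_zero (fun k => Real.iSup_nonneg fun ξ => by positivity)
    (fun k => Real.iSup_le (fun ξ => ?_) (abs_nonneg (c k))) (by simpa using hc0.abs)
  exact (EuclideanSpace.toReal_volume_closedBall_diff_translate_div_le (n k) ξ.1).trans
    (mul_le_abs_of_le_div (sqrt_nonneg _) ξ.2)

/-- Translating the unit Euclidean ball in `ℝ^{n_k}` by a vector of norm at most
`c_k/√(n_k)` (with `c_k → 0`, `n_k → ∞`) moves only a vanishing fraction of its volume:
the supremum over such translation vectors `ξ` of
`vol(B \ (B + ξ))/vol(B)` tends to `0` as `k → ∞`. -/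
theorem ball_translation_volume_ratio_tendsto_zero
    (n : ℕ → ℕ) (c : ℕ → ℝ) (hn : ∀ k, 0 < n k) (hntop : Tendsto n atTop atTop)
    (hc : ∀ k, 0 < c k) (hc0 : Tendsto c atTop (nhds 0)) :
    Tendsto (fun k =>
      ⨆ ξ : {ξ : EuclideanSpace ℝ (Fin (n k)) // ‖ξ‖ ≤ c k / Real.sqrt (n k)},
        (volume ((Metric.closedBall (0 : EuclideanSpace ℝ (Fin (n k))) 1) \
            ((fun y => ξ.1 + y) '' (Metric.closedBall 0 1)))).toReal /
          (volume (Metric.closedBall (0 : EuclideanSpace ℝ (Fin (n k))) 1)).toReal)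
      atTop (nhds 0) :=
  ball_translation_volume_ratio_tendsto_zero_general n c hc0
end

section
/- Let H, K be finite-dimensional inner product spaces and T : H → K an injective linear map. Let δ, ε > 0 with 4δ < ε. Then the maximal cardinality of an ε-separated subset of T^{-1}(δ·Ball(K)) with respect to the norm of H is at most Det_{4δ/ε}(T)^{-1}, where Det_c(T) denotes the product of the eigenvalues of |T| = (T*T)^{1/2} lying in the interval (0, c], counted with multiplicity (an empty product being 1). -/
/-!
Write `a i` for the eigenvalues of `TᴴT` and work in an orthonormal eigenbasis, where the
hypotheses read `∑ aᵢ yᵢ² ≤ δ²` on the points and `‖y - y'‖ > ε` between them. Differences of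
points then satisfy `∑ aᵢ zᵢ² ≤ 4δ²`, so with the weights `wᵢ = 2/ε² - aᵢ/(4δ²)` we get
`∑ wᵢ zᵢ² > 2 - 1 = 1`. Only the coordinates with `wᵢ > 0` (i.e. `aᵢ < 8δ²/ε²`, all of which have
`√aᵢ ≤ 4δ/ε`) contribute positively, so rescaling those coordinates by `√wᵢ` turns the set into a
`1`-separated set in a lower-dimensional Euclidean space. Balls of radius `1/2` around these points
are disjoint and lie in the ellipsoid `∑ 4aᵢ qᵢ² ≤ 1`, and comparing volumes bounds the number of
points by `∏ 1/√aᵢ` over those coordinates.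
-/

open Matrix
open Finset Function Metric MeasureTheory Module WithLp

theorem Set.Pairwise.finite_and_ncard_mul_pow_le_abs_inv_det {E : Type*}
    [NormedAddCommGroup E] [NormedSpace ℝ E] [FiniteDimensional ℝ E]
    [MeasurableSpace E] [BorelSpace E] {A : Set E} {r : ℝ}
    (hA : A.Pairwise fun x y => 2 * r < dist x y) (hr : 0 < r) {g : E →ₗ[ℝ] E}
    (hg : LinearMap.det g ≠ 0) (hsub : ∀ x ∈ A, closedBall x r ⊆ g ⁻¹' closedBall 0 1) :
    A.Finite ∧ (A.ncard : ℝ) * r ^ finrank ℝ E ≤ |(LinearMap.det g)⁻¹| := by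
  let μ : Measure E := Measure.addHaar
  have hdisj : Pairwise (Disjoint on fun x : A => closedBall (x : E) r) := fun x y hxy =>
    closedBall_disjoint_closedBall (δ := r) (ε := r)
      (by linarith [hA x.2 y.2 (Subtype.coe_ne_coe.2 hxy)])
  have hpack : A.encard * (ENNReal.ofReal (r ^ finrank ℝ E) * μ (closedBall 0 1)) ≤
      ENNReal.ofReal |(LinearMap.det g)⁻¹| * μ (closedBall 0 1) :=
    calc A.encard * (ENNReal.ofReal (r ^ finrank ℝ E) * μ (closedBall 0 1))
        = ∑' x : A, μ (closedBall (x : E) r) := by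
          simp only [Measure.addHaar_closedBall' μ _ hr.le, ENNReal.tsum_const, Set.encard]
      _ ≤ μ (⋃ x : A, closedBall (x : E) r) :=
          tsum_meas_le_meas_iUnion_of_disjoint μ (fun _ => measurableSet_closedBall) hdisj
      _ ≤ μ (g ⁻¹' closedBall 0 1) := measure_mono (Set.iUnion_subset fun x => hsub x x.2)
      _ = _ := Measure.addHaar_preimage_linearMap μ hg _
  rw [← mul_assoc, ENNReal.mul_le_mul_iff_left (measure_closedBall_pos μ 0 one_pos).ne'
    measure_closedBall_lt_top.ne] at hpack
  have hfin : A.Finite := by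
    rw [← Set.encard_lt_top_iff, lt_top_iff_ne_top]
    rintro htop
    rw [htop, ENat.toENNReal_top, ENNReal.top_mul (by positivity)] at hpack
    exact ENNReal.ofReal_ne_top (top_le_iff.1 hpack)
  refine ⟨hfin, ?_⟩
  rw [← hfin.cast_ncard_eq, ENat.toENNReal_coe, ← ENNReal.ofReal_natCast,
    ← ENNReal.ofReal_mul (Nat.cast_nonneg _)] at hpack
  exact (ENNReal.ofReal_le_ofReal_iff (abs_nonneg _)).1 hpack

theorem add_sq_le_add_mul_sq_div_add_sq_div {a b : ℝ} (ha : 0 < a) (hb : 0 < b) (u v : ℝ) :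
    (u + v) ^ 2 ≤ (a + b) * (u ^ 2 / a + v ^ 2 / b) := by
  rw [div_add_div _ _ ha.ne' hb.ne', mul_div_assoc', le_div_iff₀ (by positivity)]
  nlinarith [sq_nonneg (b * u - a * v)]

theorem EuclideanSpace.sum_mul_sq_le_one_of_dist_le {ι : Type*} [Fintype ι] {β κ : ι → ℝ} {r : ℝ}
    (hβ : ∀ i, 0 < β i) (hr : 0 < r) (hκ : ∀ i, κ i * (2 * β i + 2 * r ^ 2) ≤ 1)
    {p q : EuclideanSpace ℝ ι} (hp : ∑ i, p i ^ 2 / β i ≤ 1) (hq : dist q p ≤ r) :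
    ∑ i, κ i * q i ^ 2 ≤ 1 := by
  have hpt : ∀ i, κ i * q i ^ 2 ≤ p i ^ 2 / β i / 2 + (q i - p i) ^ 2 / r ^ 2 / 2 := by
    intro i
    set X := p i ^ 2 / β i / 2 + (q i - p i) ^ 2 / r ^ 2 / 2
    have hX : 0 ≤ X := by have := hβ i; positivity
    have hcs : q i ^ 2 ≤ (2 * β i + 2 * r ^ 2) * X := by
      calc q i ^ 2 = (p i + (q i - p i)) ^ 2 := by ring
        _ ≤ (2 * β i + 2 * r ^ 2) * (p i ^ 2 / (2 * β i) + (q i - p i) ^ 2 / (2 * r ^ 2)) :=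
          add_sq_le_add_mul_sq_div_add_sq_div (by linarith [hβ i]) (by positivity) _ _
        _ = _ := by simp only [X]; ring
    rcases le_total 0 (κ i) with hκi | hκi
    · nlinarith [mul_le_mul_of_nonneg_left hcs hκi, hκ i]
    · nlinarith [sq_nonneg (q i)]
  have hqp : ∑ i, (q i - p i) ^ 2 ≤ r ^ 2 := by
    rw [EuclideanSpace.dist_eq, Real.sqrt_le_left hr.le] at hq
    simpa only [Real.dist_eq, sq_abs] using hq
  calc ∑ i, κ i * q i ^ 2 ≤ ∑ i, (p i ^ 2 / β i / 2 + (q i - p i) ^ 2 / r ^ 2 / 2) :=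
        sum_le_sum fun i _ => hpt i
    _ = (∑ i, p i ^ 2 / β i) / 2 + (∑ i, (q i - p i) ^ 2) / r ^ 2 / 2 := by
        simp only [sum_add_distrib, sum_div]
    _ ≤ 1 / 2 + r ^ 2 / r ^ 2 / 2 := by gcongr
    _ = 1 := by field_simp; norm_num

section Euclidean

variable {ι : Type*}

noncomputable def weightedProj (S : Finset ι) (w : ι → ℝ) (y : EuclideanSpace ℝ ι) :
    EuclideanSpace ℝ S :=
  toLp 2 fun i => √(w i) * y i

theorem dist_weightedProj_sq {S : Finset ι} {w : ι → ℝ} (hw : ∀ i ∈ S, 0 ≤ w i)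
    (y y' : EuclideanSpace ℝ ι) :
    dist (weightedProj S w y) (weightedProj S w y') ^ 2 = ∑ i ∈ S, w i * (y i - y' i) ^ 2 := by
  rw [EuclideanSpace.dist_eq, Real.sq_sqrt (by positivity), ← sum_coe_sort S]
  refine sum_congr rfl fun i _ => ?_
  change dist (√(w i) * y i) (√(w i) * y' i) ^ 2 = _
  rw [Real.dist_eq, sq_abs, ← mul_sub, mul_pow, Real.sq_sqrt (hw i i.2)]

noncomputable def packingWeight (a : ι → ℝ) (δ ε : ℝ) (i : ι) : ℝ :=
  2 / ε ^ 2 - a i / (4 * δ ^ 2)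

variable {a : ι → ℝ} {δ ε : ℝ}

theorem sqrt_le_of_packingWeight_pos (ha : ∀ i, 0 ≤ a i) (hδ : 0 < δ) (hε : 0 < ε) {i : ι}
    (hi : 0 < packingWeight a δ ε i) : √(a i) ≤ 4 * δ / ε := by
  have := ha i
  rw [packingWeight, sub_pos, div_lt_div_iff₀ (by positivity) (by positivity)] at hi
  rw [Real.sqrt_le_left (by positivity), div_pow, le_div_iff₀ (by positivity)]
  nlinarith

variable [Fintype ι]

theorem sum_mul_sq_sub_le_dist_weightedProj_sq (w : ι → ℝ) (y y' : EuclideanSpace ℝ ι) :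
    ∑ i, w i * (y i - y' i) ^ 2 ≤
      dist (weightedProj {i | 0 < w i} w y) (weightedProj {i | 0 < w i} w y') ^ 2 := by
  rw [dist_weightedProj_sq fun i hi => (mem_filter.1 hi).2.le,
    ← sum_filter_add_sum_filter_not univ (0 < w ·)]
  exact add_le_of_nonpos_right <| sum_nonpos fun i hi =>
    mul_nonpos_of_nonpos_of_nonneg (not_lt.1 (mem_filter.1 hi).2) (sq_nonneg _)

theorem one_lt_sum_packingWeight_mul_sq_sub (ha : ∀ i, 0 ≤ a i) (hδ : 0 < δ) (hε : 0 < ε)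
    {y y' : EuclideanSpace ℝ ι} (hy : ∑ i, a i * y i ^ 2 ≤ δ ^ 2)
    (hy' : ∑ i, a i * y' i ^ 2 ≤ δ ^ 2) (hyy' : ε < dist y y') :
    1 < ∑ i, packingWeight a δ ε i * (y i - y' i) ^ 2 := by
  have hdiff : ∑ i, a i * (y i - y' i) ^ 2 ≤ 4 * δ ^ 2 :=
    calc ∑ i, a i * (y i - y' i) ^ 2 ≤ ∑ i, (2 * (a i * y i ^ 2) + 2 * (a i * y' i ^ 2)) :=
          sum_le_sum fun i _ => by nlinarith [ha i, mul_nonneg (ha i) (sq_nonneg (y i + y' i))]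
      _ ≤ 4 * δ ^ 2 := by rw [sum_add_distrib, ← mul_sum, ← mul_sum]; linarith
  have hdist : ε ^ 2 < ∑ i, (y i - y' i) ^ 2 := by
    rw [EuclideanSpace.dist_eq, Real.lt_sqrt hε.le] at hyy'
    simpa only [Real.dist_eq, sq_abs] using hyy'
  have hsplit : ∑ i, packingWeight a δ ε i * (y i - y' i) ^ 2 =
      2 / ε ^ 2 * ∑ i, (y i - y' i) ^ 2 - (∑ i, a i * (y i - y' i) ^ 2) / (4 * δ ^ 2) := by
    rw [mul_sum, sum_div, ← sum_sub_distrib]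
    exact sum_congr rfl fun i _ => by rw [packingWeight]; ring
  have h2 : 2 < 2 / ε ^ 2 * ∑ i, (y i - y' i) ^ 2 := by
    rw [div_mul_eq_mul_div, lt_div_iff₀ (by positivity)]; linarith
  have h1 : (∑ i, a i * (y i - y' i) ^ 2) / (4 * δ ^ 2) ≤ 1 := by
    rw [div_le_one (by positivity)]; exact hdiff
  linarith

theorem closedBall_weightedProj_subset [DecidableEq ι] {S : Finset ι}
    (hS : ∀ i ∈ S, 0 < packingWeight a δ ε i) (ha : ∀ i, 0 < a i) (hδ : 0 < δ)
    (hδε : 4 * δ < ε) {y : EuclideanSpace ℝ ι} (hy : ∑ i, a i * y i ^ 2 ≤ δ ^ 2) :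
    closedBall (weightedProj S (packingWeight a δ ε) y) (1 / 2) ⊆
      toLpLin 2 2 (diagonal fun i : S => 2 * √(a i)) ⁻¹' closedBall 0 1 := by
  intro q hq
  have hε : 0 < ε := by linarith
  have hS' : ∀ i : S, 0 < packingWeight a δ ε i := fun i => hS i i.2
  -- the ellipsoid of the centres has squared semi-axes `wᵢ δ² / aᵢ`
  have hellipse : ∑ i : S, 4 * a i * q i ^ 2 ≤ 1 := by
    refine EuclideanSpace.sum_mul_sq_le_one_of_dist_le
      (β := fun i : S => packingWeight a δ ε i * δ ^ 2 / a i) (κ := fun i : S => 4 * a i)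
      (fun i => by have := hS' i; have := ha i; positivity) (by norm_num) (fun i => ?_) ?_ hq
    · have := ha i
      rw [packingWeight]
      field_simp
      nlinarith
    · calc ∑ i : S, weightedProj S (packingWeight a δ ε) y i ^ 2 /
              (packingWeight a δ ε i * δ ^ 2 / a i)
            = ∑ i ∈ S, a i * y i ^ 2 / δ ^ 2 := by
              rw [← sum_coe_sort S]
              refine sum_congr rfl fun i _ => ?_
              change (√(packingWeight a δ ε i) * y i) ^ 2 / _ = _
              have := hS' i
              rw [mul_pow, Real.sq_sqrt this.le]
              field_simp
          _ ≤ ∑ i, a i * y i ^ 2 / δ ^ 2 := sum_le_sum_of_subset_of_nonneg (subset_univ S)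
              fun i _ _ => by have := ha i; positivity
          _ ≤ 1 := by rw [← sum_div, div_le_one (by positivity)]; exact hy
  rw [Set.mem_preimage, mem_closedBall_zero_iff, ← sq_le_one_iff₀ (norm_nonneg _),
    EuclideanSpace.norm_sq_eq]
  refine (sum_congr rfl fun i _ => ?_).trans_le hellipse
  rw [toLpLin_apply, ofLp_toLp, mulVec_diagonal, Real.norm_eq_abs, sq_abs, mul_pow, mul_pow,
    Real.sq_sqrt (ha i).le]
  ring

theorem finite_and_ncard_le_inv_prod_sqrt_of_separated (ha : ∀ i, 0 < a i) (hδ : 0 < δ)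
    (hδε : 4 * δ < ε) {A : Set (EuclideanSpace ℝ ι)}
    (hA : ∀ y ∈ A, ∑ i, a i * y i ^ 2 ≤ δ ^ 2) (hsep : A.Pairwise fun y y' => ε < dist y y') :
    A.Finite ∧
      (A.ncard : ℝ) ≤ (∏ i ∈ univ.filter (fun i => √(a i) ≤ 4 * δ / ε), √(a i))⁻¹ := by
  classical
  have hε : 0 < ε := by linarith
  set S := univ.filter (0 < packingWeight a δ ε ·)
  set Q := weightedProj S (packingWeight a δ ε)
  have hQsep : A.Pairwise fun y y' => 2 * (1 / 2 : ℝ) < dist (Q y) (Q y') :=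
    fun y hy y' hy' hne => by
      change 2 * (1 / 2 : ℝ) < dist (Q y) (Q y')
      rw [mul_one_div_cancel two_ne_zero, ← one_lt_sq_iff₀ dist_nonneg]
      exact (one_lt_sum_packingWeight_mul_sq_sub (fun i => (ha i).le) hδ hε (hA y hy) (hA y' hy')
        (hsep hy hy' hne)).trans_le (sum_mul_sq_sub_le_dist_weightedProj_sq _ y y')
  have hQinj : A.InjOn Q := fun y hy y' hy' h => by
    by_contra hne
    exact absurd (hQsep hy hy' hne) (by simp [h])
  have hprod : 0 < 2 ^ #S * ∏ i ∈ S, √(a i) :=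
    mul_pos (by positivity) (prod_pos fun i _ => Real.sqrt_pos.2 (ha i))
  have hdet : LinearMap.det (toLpLin 2 2 (diagonal fun i : S => 2 * √(a i))) =
      2 ^ #S * ∏ i ∈ S, √(a i) := by
    rw [toLpLin_eq_toLin, LinearMap.det_toLin, det_diagonal, prod_coe_sort S (fun i => 2 * √(a i)),
      prod_mul_distrib, prod_const]
  obtain ⟨hfin, hcard⟩ := (hQinj.pairwise_image.2 hQsep).finite_and_ncard_mul_pow_le_abs_inv_det
    (by norm_num) (hdet ▸ hprod.ne') (Set.forall_mem_image.2 fun y hy =>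
      closedBall_weightedProj_subset (fun i hi => (mem_filter.1 hi).2) ha hδ hδε (hA y hy))
  refine ⟨hfin.of_finite_image hQinj, ?_⟩
  rw [hQinj.ncard_image, finrank_euclideanSpace, Fintype.card_coe, hdet, abs_inv,
    abs_of_pos hprod, mul_inv, one_div, inv_pow, mul_comm, mul_le_mul_iff_right₀ (by positivity)]
    at hcard
  refine hcard.trans (inv_anti₀ (prod_pos fun i _ => Real.sqrt_pos.2 (ha i)) ?_)
  exact prod_le_prod_of_subset_of_le_one
    (fun i hi => mem_filter.2 ⟨mem_univ i,
      sqrt_le_of_packingWeight_pos (fun i => (ha i).le) hδ hε (mem_filter.1 hi).2⟩)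
    (fun i _ => Real.sqrt_nonneg _)
    fun i hi _ => (mem_filter.1 hi).2.trans ((div_lt_one hε).2 hδε).le

end Euclidean

theorem Matrix.IsHermitian.sum_eigenvalues_mul_sq_repr {n : Type*} [Fintype n] [DecidableEq n]
    {A : Matrix n n ℝ} (hA : A.IsHermitian) (x : n → ℝ) :
    ∑ i, hA.eigenvalues i * hA.eigenvectorBasis.repr (toLp 2 x) i ^ 2 = x ⬝ᵥ A *ᵥ x := by
  set b := hA.eigenvectorBasis
  have hrepr : ∀ (v : n → ℝ) i, b.repr (toLp 2 v) i = ⇑(b i) ⬝ᵥ v := fun v i => by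
    rw [b.repr_apply_apply, EuclideanSpace.inner_eq_star_dotProduct]
    simp [dotProduct_comm]
  have hAb : ∀ i, ⇑(b i) ⬝ᵥ A *ᵥ x = hA.eigenvalues i * ⇑(b i) ⬝ᵥ x := fun i => by
    rw [dotProduct_mulVec, ← mulVec_transpose, ← conjTranspose_eq_transpose_of_trivial, hA.eq,
      hA.mulVec_eigenvectorBasis, smul_dotProduct, smul_eq_mul]
  calc ∑ i, hA.eigenvalues i * b.repr (toLp 2 x) i ^ 2
      = ∑ i, inner ℝ (toLp 2 x) (b i) * inner ℝ (b i) (toLp 2 (A *ᵥ x)) := by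
        refine sum_congr rfl fun i _ => ?_
        rw [real_inner_comm, ← b.repr_apply_apply, ← b.repr_apply_apply, hrepr, hrepr, hAb]
        ring
    _ = x ⬝ᵥ A *ᵥ x := by
        rw [b.sum_inner_mul_inner, EuclideanSpace.inner_eq_star_dotProduct]
        simp [dotProduct_comm]

theorem separated_in_approximate_kernel_card_bound_general {m n : ℕ}
    (T : Matrix (Fin m) (Fin n) ℝ) (hinj : Function.Injective T.mulVec)
    (δ ε : ℝ) (hδ : 0 < δ) (h4 : 4 * δ < ε)
    (hH : (Tᴴ * T).IsHermitian)
    (E : Set (Fin n → ℝ))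
    (hE : ∀ x ∈ E, Real.sqrt (∑ i, (T.mulVec x i) ^ 2) ≤ δ)
    (hsep : ∀ x ∈ E, ∀ y ∈ E, x ≠ y → ε < Real.sqrt (∑ i, (x i - y i) ^ 2)) :
    E.Finite ∧
      (E.ncard : ℝ) ≤
        (∏ i ∈ Finset.univ.filter
            (fun i => Real.sqrt (hH.eigenvalues i) ≤ 4 * δ / ε),
          Real.sqrt (hH.eigenvalues i))⁻¹ := by
  let Y : (Fin n → ℝ) → EuclideanSpace ℝ (Fin n) := fun x => hH.eigenvectorBasis.repr (toLp 2 x)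
  have hY : Injective Y := hH.eigenvectorBasis.repr.injective.comp (toLp_injective 2)
  have hnorm : ∀ x ∈ E, ∑ i, hH.eigenvalues i * Y x i ^ 2 ≤ δ ^ 2 := fun x hx => by
    rw [hH.sum_eigenvalues_mul_sq_repr, ← mulVec_mulVec, dotProduct_mulVec, vecMul_conjTranspose,
      star_trivial, star_trivial, dotProduct_comm]
    simpa [dotProduct, sq, Real.sqrt_le_left hδ.le] using hE x hx
  have hdist : (Y '' E).Pairwise fun y y' => ε < dist y y' := by
    rw [hY.injOn.pairwise_image]
    intro x hx y hy hxy
    change ε < dist (Y x) (Y y)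
    rw [LinearIsometryEquiv.dist_map, EuclideanSpace.dist_eq]
    simpa only [Real.dist_eq, sq_abs] using hsep x hx y hy hxy
  obtain ⟨hfin, hcard⟩ := finite_and_ncard_le_inv_prod_sqrt_of_separated
    (PosDef.conjTranspose_mul_self T hinj).eigenvalues_pos hδ h4 (Set.forall_mem_image.2 hnorm)
    hdist
  exact ⟨hfin.of_finite_image hY.injOn, by rwa [Set.ncard_image_of_injective _ hY] at hcard⟩

/-- Let `T : ℝ^n → ℝ^m` be an injective linear map (given by a matrix) and `δ, ε > 0`
with `4δ < ε`. Then any `ε`-separated subset of `T^{-1}(δ·Ball)` is finite, of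
cardinality at most `Det_{4δ/ε}(T)⁻¹`, where `Det_c(T)` is the product of the
eigenvalues of `|T| = (TᵀT)^{1/2}` (i.e. the singular values of `T`) lying in `(0, c]`,
counted with multiplicity. -/
theorem separated_in_approximate_kernel_card_bound {m n : ℕ}
    (T : Matrix (Fin m) (Fin n) ℝ) (hinj : Function.Injective T.mulVec)
    (δ ε : ℝ) (hδ : 0 < δ) (hε : 0 < ε) (h4 : 4 * δ < ε)
    (hH : (Tᴴ * T).IsHermitian)
    (E : Set (Fin n → ℝ))
    (hE : ∀ x ∈ E, Real.sqrt (∑ i, (T.mulVec x i) ^ 2) ≤ δ)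
    (hsep : ∀ x ∈ E, ∀ y ∈ E, x ≠ y → ε < Real.sqrt (∑ i, (x i - y i) ^ 2)) :
    E.Finite ∧
      (E.ncard : ℝ) ≤
        (∏ i ∈ Finset.univ.filter
            (fun i => Real.sqrt (hH.eigenvalues i) ≤ 4 * δ / ε),
          Real.sqrt (hH.eigenvalues i))⁻¹ :=
  separated_in_approximate_kernel_card_bound_general T hinj δ ε hδ h4 hH E hE hsep
end
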